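/- Let X and Y be 2×2 matrices over a commutative ring S with determinants δ = det(X), δ′ = det(Y) and supertraces τ = str(X), τ′ = str(Y), where str(M) := m₁₁ − m₂₂. Then −det[X,Y] = δ·τ′² + δ′·τ² + tr(XY)·τ′·τ − str(XY)·str(YX). -/
import Mathlib


/-- The supertrace of a 2×2 matrix: `str M = M 0 0 - M 1 1`. -/
def str {S : Type*} [CommRing S] (M : Matrix (Fin 2) (Fin 2) S) : S :=
  M 0 0 - M 1 1

theorem supertrace_version_determinantal_formula {S : Type*} [CommRing S]
    (X Y : Matrix (Fin 2) (Fin 2) S) :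
    -(X * Y - Y * X).det =
      X.det * (str Y) ^ 2 + Y.det * (str X) ^ 2
        + Matrix.trace (X * Y) * str Y * str X - str (X * Y) * str (Y * X) := by
  simp only [str, Matrix.det_fin_two, Matrix.trace_fin_two, Matrix.mul_apply,
    Matrix.sub_apply, Fin.sum_univ_two]
  ring
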